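/- For the static equilibrium of a Bingham fluid on an inclined plane with bottom H(x) = cos(πx) on [0,L], L = 10, h₀ = 3, the rigidity condition sup over x ∈ [0,L] of (ρ g sin α/√2)·|h₀(x − L/2) − sin(πx)/π + sin(πL)/π| / (h₀ − cos(πx)) is attained and equals ρ g sin(α) h₀ L / (2√2 (h₀ − 1)); with ρ = 1, g = 9.81, α = π/18 this value is approximately 9.0341. -/

import Mathlib

/-!
Since `sin (π n) = 0`, the bound `|sin a - sin b| ≤ |a - b|` gives `|sin (π x)| ≤ π min(x, n - x)` on
`[0, n]`, so for `h₀ ≥ 1` the numerator `|h₀ (x - n/2) - sin (π x) / π|` is at most `h₀ n / 2`, with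
equality at both endpoints. The denominator `h₀ - cos (π x)` is at least `h₀ - 1`, with equality at
`x = 0` and, when `n` is even, at `x = n`.
-/

open Real

/-- The rigidity bound function φ for the parallel-free-surface test problem,
with bottom H(x) = cos(πx), h₀ = 3, L = 10. -/
noncomputable def phiRigidity (ρ g α : ℝ) (x : ℝ) : ℝ :=
  (ρ * g * Real.sin α / Real.sqrt 2) *
    |3 * (x - 10 / 2) - (Real.sin (π * x) - Real.sin (π * 10)) / π| /
    (3 - Real.cos (π * x))

noncomputable def rigidityProfile (h₀ L x : ℝ) : ℝ :=
  |h₀ * (x - L / 2) - (sin (π * x) - sin (π * L)) / π| / (h₀ - cos (π * x))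

lemma phiRigidity_eq (ρ g α x : ℝ) :
    phiRigidity ρ g α x = ρ * g * sin α / √2 * rigidityProfile 3 10 x :=
  mul_div_assoc _ _ _

lemma sin_pi_mul_natCast (n : ℕ) : sin (π * n) = 0 := by
  rw [mul_comm, sin_nat_mul_pi]

section Profile

variable {h₀ : ℝ} (n : ℕ)

lemma abs_sub_mul_sub_sin_div_pi_le (hh₀ : 1 ≤ h₀) {x : ℝ} (hx : x ∈ Set.Icc 0 (n : ℝ)) :
    |h₀ * (x - n / 2) - (sin (π * x) - sin (π * n)) / π| ≤ h₀ * n / 2 := by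
  obtain ⟨hx₀, hxn⟩ := hx
  have hleft : |sin (π * x)| ≤ π * x := abs_sin_le_abs.trans_eq (abs_of_nonneg (by positivity))
  have hright : |sin (π * x)| ≤ π * (n - x) := by
    have := abs_sin_sub_sin_le (π * x) (π * n)
    rwa [sin_pi_mul_natCast, sub_zero, ← mul_sub, abs_mul, abs_of_pos pi_pos, abs_sub_comm,
      abs_of_nonneg (sub_nonneg.2 hxn)] at this
  rw [sin_pi_mul_natCast, sub_zero]
  have hupper : sin (π * x) / π ≤ x := by
    rw [div_le_iff₀ pi_pos]; linarith [(abs_le.1 hleft).2]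
  have hlower : -(n - x) ≤ sin (π * x) / π := by
    rw [le_div_iff₀ pi_pos]; linarith [(abs_le.1 hright).1]
  rw [abs_le]
  constructor <;> nlinarith [mul_nonneg (sub_nonneg.2 hh₀) hx₀,
    mul_nonneg (sub_nonneg.2 hh₀) (sub_nonneg.2 hxn)]

lemma rigidityProfile_le (hh₀ : 1 < h₀) {x : ℝ} (hx : x ∈ Set.Icc 0 (n : ℝ)) :
    rigidityProfile h₀ n x ≤ h₀ * n / (2 * (h₀ - 1)) := by
  have hden : h₀ - 1 ≤ h₀ - cos (π * x) := by linarith [cos_le_one (π * x)]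
  calc rigidityProfile h₀ n x ≤ h₀ * n / 2 / (h₀ - 1) := by
        unfold rigidityProfile
        gcongr
        exact abs_sub_mul_sub_sin_div_pi_le n hh₀.le hx
    _ = h₀ * n / (2 * (h₀ - 1)) := by rw [div_div]

lemma rigidityProfile_zero (hh₀ : 0 ≤ h₀) :
    rigidityProfile h₀ n 0 = h₀ * n / (2 * (h₀ - 1)) := by
  rw [rigidityProfile, mul_zero, sin_zero, cos_zero, sin_pi_mul_natCast, sub_zero, zero_div,
    sub_zero, zero_sub, mul_neg, abs_neg, abs_of_nonneg (by positivity), ← mul_div_assoc, div_div]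

lemma rigidityProfile_self (hh₀ : 0 ≤ h₀) (hn : Even n) :
    rigidityProfile h₀ n n = h₀ * n / (2 * (h₀ - 1)) := by
  have hcos_n : cos (π * n) = 1 := by rw [mul_comm, cos_nat_mul_pi, hn.neg_one_pow]
  rw [rigidityProfile, sin_pi_mul_natCast, hcos_n, sub_self, zero_div, sub_zero, sub_half,
    abs_of_nonneg (by positivity), ← mul_div_assoc, div_div]

end Profile

-- `sin (π / 18)` is the root in `(0, 1/5)` of the triple-angle equation `3 s - 4 s ^ 3 = 1 / 2`.
lemma sin_pi_div_eighteen_mem : sin (π / 18) ∈ Set.Ioo 0.173646 0.173649 := by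
  set s := sin (π / 18)
  have htriple : 3 * s - 4 * s ^ 3 = 1 / 2 := by
    rw [← sin_three_mul, show 3 * (π / 18) = π / 6 by ring, sin_pi_div_six]
  have hpos : 0 < s := sin_pos_of_pos_of_lt_pi (by positivity) (by linarith [pi_pos])
  have hsmall : s < 0.2 := calc
    s < π / 18 := sin_lt (by positivity)
    _ < 0.2 := by linarith [pi_lt_d2]
  constructor <;> nlinarith [sq_nonneg s, sq_nonneg (s - 0.1736)]

lemma sqrt_two_mem : √2 ∈ Set.Ioo 1.414213 1.414214 := by
  have hsq : √2 ^ 2 = 2 := sq_sqrt (by norm_num)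
  have hpos : 0 < √2 := by positivity
  constructor <;> nlinarith

lemma abs_rigidity_value_sub_lt :
    |1 * 9.81 * sin (π / 18) * 3 * 10 / (2 * √2 * (3 - 1)) - 9.0341| < 0.001 := by
  obtain ⟨hs₀, hs₁⟩ := sin_pi_div_eighteen_mem
  obtain ⟨hr₀, hr₁⟩ := sqrt_two_mem
  have hvalue : 1 * 9.81 * sin (π / 18) * 3 * 10 / (2 * √2 * (3 - 1)) =
      36.7875 * (sin (π / 18) * √2) := by
    field_simp
    rw [sq_sqrt (by norm_num)]
    ring
  rw [hvalue, abs_sub_lt_iff]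
  constructor <;> nlinarith [mul_lt_mul'' hs₁ hr₁ (by positivity) (by positivity),
    mul_lt_mul'' hs₀ hr₀ (by norm_num) (by norm_num)]

theorem rigidity_condition_value (ρ g α : ℝ) (hρ : 0 < ρ) (hg : 0 < g)
    (hα : 0 < α) (hα' : α < π / 2) :
    (∀ x ∈ Set.Icc (0 : ℝ) 10,
      phiRigidity ρ g α x ≤ ρ * g * Real.sin α * 3 * 10 / (2 * Real.sqrt 2 * (3 - 1))) ∧
    phiRigidity ρ g α 0 = ρ * g * Real.sin α * 3 * 10 / (2 * Real.sqrt 2 * (3 - 1)) ∧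
    phiRigidity ρ g α 10 = ρ * g * Real.sin α * 3 * 10 / (2 * Real.sqrt 2 * (3 - 1)) ∧
    (ρ = 1 → g = 9.81 → α = π / 18 →
      |ρ * g * Real.sin α * 3 * 10 / (2 * Real.sqrt 2 * (3 - 1)) - 9.0341| < 0.001) := by
  have hsin : 0 ≤ sin α := sin_nonneg_of_nonneg_of_le_pi hα.le (by linarith [pi_pos])
  have hmax : ρ * g * sin α * 3 * 10 / (2 * √2 * (3 - 1)) =
      ρ * g * sin α / √2 * ((3 : ℝ) * (10 : ℕ) / (2 * (3 - 1))) := by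
    push_cast; ring
  have h10 : ((10 : ℕ) : ℝ) = 10 := by norm_num
  refine ⟨fun x hx => ?_, ?_, ?_, ?_⟩
  · rw [hmax, phiRigidity_eq, ← h10]
    gcongr
    exact rigidityProfile_le 10 (by norm_num) (h10 ▸ hx)
  · rw [hmax, phiRigidity_eq, ← h10, rigidityProfile_zero 10 (by norm_num)]
  · rw [hmax, phiRigidity_eq, ← h10, rigidityProfile_self 10 (by norm_num) (by decide)]
  · rintro rfl rfl rfl
    exact abs_rigidity_value_sub_lt
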